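/- arXiv:2306.00222 — 4 statements merged into one kernel-verified Lean document; each statement's English description precedes it below -/
import Mathlib

section
/- Let G be a finite connected simple graph on vertex set V, let T be a spanning tree of G, let S ⊆ V be a nonempty subset such that the subgraph of T induced on S is connected, and let T_S be any spanning tree of the induced subgraph G[S]. Then the spanning subgraph of G whose edge set is (E(T) \ E(T[S])) ∪ E(T_S) is a spanning tree of G. -/
/-!
Every edge of `T` with both ends in `S` is replaced by a path of `Ts`, and every other edge of
`T` is kept, so the mutant is connected. Both `T[S]` and `Ts` are trees on `S`, hence have
`|S| - 1` edges each, so the mutant has as many edges as `T`, namely `|V| - 1`; a connected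
graph on `|V|` vertices with `|V| - 1` edges is a tree.
-/

/-- The edge set of a graph on a subtype `S`, viewed as a set of edges of the ambient
vertex type. -/
def liftedEdges {V : Type*} {S : Set V} (H : SimpleGraph S) : Set (Sym2 V) :=
  Sym2.map (Subtype.val : S → V) '' H.edgeSet

/-- The result of the sub-graph (SG) mutation: replace the edges of `T` inside `S` by the
edges of a spanning tree `Ts` of the induced subgraph on `S`. -/
def sgMutant {V : Type*} (T : SimpleGraph V) (S : Set V) (Ts : SimpleGraph S) :
    SimpleGraph V :=
  SimpleGraph.fromEdgeSet ((T.edgeSet \ liftedEdges (T.induce S)) ∪ liftedEdges Ts)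

namespace SimpleGraph

variable {V : Type*}

lemma Reachable.of_forall_adj_reachable {G H : SimpleGraph V}
    (h : ∀ ⦃u v⦄, G.Adj u v → H.Reachable u v) {u v : V} (huv : G.Reachable u v) :
    H.Reachable u v := by
  obtain ⟨p⟩ := huv
  induction p with
  | nil => rfl
  | cons hadj _ ih => exact (h hadj).trans ih

lemma Connected.of_forall_adj_reachable {G H : SimpleGraph V} (hG : G.Connected)
    (h : ∀ ⦃u v⦄, G.Adj u v → H.Reachable u v) : H.Connected :=
  have := hG.nonempty
  .mk fun u v => (hG u v).of_forall_adj_reachable h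

variable {S : Set V}

lemma ncard_edgeSet_spanningCoe (H : SimpleGraph S) :
    H.spanningCoe.edgeSet.ncard = H.edgeSet.ncard := by
  rw [edgeSet_map]
  exact Set.ncard_image_of_injective _ (Function.Embedding.subtype _).sym2Map.injective

lemma disjoint_sdiff_spanningCoe_induce (T : SimpleGraph V) (H : SimpleGraph S) :
    Disjoint (T \ (T.induce S).spanningCoe) H.spanningCoe := by
  rw [← disjoint_edgeSet, Set.disjoint_left, Sym2.forall]
  rintro x y ⟨hT, hP⟩ ⟨hxy, a, b, -, rfl, rfl⟩
  exact hP ⟨hxy, a, b, hT, rfl, rfl⟩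

lemma ncard_edgeSet_sdiff_sup_add [Finite V] {T A B : SimpleGraph V} (hA : A ≤ T)
    (hB : Disjoint (T \ A) B) :
    (T \ A ⊔ B).edgeSet.ncard + A.edgeSet.ncard = T.edgeSet.ncard + B.edgeSet.ncard := by
  rw [edgeSet_sup, Set.ncard_union_eq (disjoint_edgeSet.mpr hB), edgeSet_sdiff, add_right_comm,
    Set.ncard_sdiff_add_ncard_of_subset (edgeSet_mono hA)]

lemma Connected.sdiff_induce_sup_spanningCoe {T : SimpleGraph V} {H : SimpleGraph S}
    (hT : T.Connected) (hH : H.Preconnected) :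
    (T \ (T.induce S).spanningCoe ⊔ H.spanningCoe).Connected := by
  refine hT.of_forall_adj_reachable fun x y hxy => ?_
  by_cases hS : x ∈ S ∧ y ∈ S
  · exact ((hH ⟨x, hS.1⟩ ⟨y, hS.2⟩).map (Embedding.spanningCoe H).toHom).mono le_sup_right
  · refine Adj.reachable (Or.inl ⟨hxy, fun hP => hS ?_⟩)
    obtain ⟨-, a, b, -, rfl, rfl⟩ := hP
    exact ⟨a.2, b.2⟩

lemma IsTree.sdiff_induce_sup_spanningCoe [Finite V] {T : SimpleGraph V} {H : SimpleGraph S}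
    (hT : T.IsTree) (hTS : (T.induce S).Connected) (hH : H.IsTree) :
    (T \ (T.induce S).spanningCoe ⊔ H.spanningCoe).IsTree := by
  have hTS_card := (isTree_iff_connected_and_card.mp ⟨hTS, hT.isAcyclic.induce S⟩).2
  rw [isTree_iff_connected_and_card] at hH hT ⊢
  refine ⟨hT.1.sdiff_induce_sup_spanningCoe hH.1.preconnected, ?_⟩
  have hcount := ncard_edgeSet_sdiff_sup_add (spanningCoe_induce_le (G := T) S)
    (disjoint_sdiff_spanningCoe_induce T H)
  simp only [Nat.card_coe_set_eq, ncard_edgeSet_spanningCoe] at hcount hTS_card hH hT ⊢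
  omega

end SimpleGraph

open SimpleGraph

lemma liftedEdges_eq_edgeSet_spanningCoe {V : Type*} {S : Set V} (H : SimpleGraph S) :
    liftedEdges H = H.spanningCoe.edgeSet := by
  rw [edgeSet_map]
  rfl

lemma sgMutant_eq_sdiff_sup {V : Type*} (T : SimpleGraph V) (S : Set V) (Ts : SimpleGraph S) :
    sgMutant T S Ts = T \ (T.induce S).spanningCoe ⊔ Ts.spanningCoe := by
  rw [sgMutant, liftedEdges_eq_edgeSet_spanningCoe, liftedEdges_eq_edgeSet_spanningCoe,
    ← edgeSet_sdiff, ← edgeSet_sup, fromEdgeSet_edgeSet]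

theorem sgMutant_is_spanning_tree_general {V : Type*} [Fintype V]
    (G : SimpleGraph V)
    (T : SimpleGraph V) (hTle : T ≤ G) (hT : T.IsTree)
    (S : Set V) (hconn : (T.induce S).Connected)
    (Ts : SimpleGraph S) (hTsle : Ts ≤ G.induce S) (hTs : Ts.IsTree) :
    sgMutant T S Ts ≤ G ∧ (sgMutant T S Ts).IsTree := by
  rw [sgMutant_eq_sdiff_sup]
  refine ⟨sup_le (sdiff_le.trans hTle) ?_, hT.sdiff_induce_sup_spanningCoe hconn hTs⟩
  exact (map_monotone _ hTsle).trans (G.spanningCoe_induce_le S)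

/-- Replacing the connected sub-tree of a spanning tree `T` on `S` by any spanning tree of
the induced subgraph `G[S]` again yields a spanning tree of `G`. -/
theorem sgMutant_is_spanning_tree {V : Type*} [Fintype V]
    (G : SimpleGraph V) (hG : G.Connected)
    (T : SimpleGraph V) (hTle : T ≤ G) (hT : T.IsTree)
    (S : Set V) (hS : S.Nonempty) (hconn : (T.induce S).Connected)
    (Ts : SimpleGraph S) (hTsle : Ts ≤ G.induce S) (hTs : Ts.IsTree) :
    sgMutant T S Ts ≤ G ∧ (sgMutant T S Ts).IsTree :=
  sgMutant_is_spanning_tree_general G T hTle hT S hconn Ts hTsle hTs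
end

section
/- Let G be a finite connected simple graph on vertex set V with two edge-cost functions c1, c2 : E(G) → ℝ, let λ ∈ [0, 1], let T be a spanning tree of G, let S ⊆ V be nonempty with the subgraph of T induced on S connected, and let T_S be a spanning tree of the induced subgraph G[S] that minimizes the scalarized cost ∑_{e} (λ c1(e) + (1−λ) c2(e)) among all spanning trees of G[S]. Let T' be the spanning subgraph of G with edge set (E(T) \ E(T[S])) ∪ E(T_S). Then λ c1(T') + (1−λ) c2(T') ≤ λ c1(T) + (1−λ) c2(T), where c_i(T) denotes ∑_{e ∈ E(T)} c_i(e). -/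
/-- Total cost of (the edges of) a graph with respect to an edge-cost function. -/
noncomputable def edgeCost {V : Type*} (H : SimpleGraph V) (c : Sym2 V → ℝ) : ℝ :=
  ∑ᶠ e ∈ H.edgeSet, c e

/-- Total cost of a graph on a subtype, with respect to an edge-cost function of the
ambient vertex type. -/
noncomputable def subEdgeCost {V : Type*} {S : Set V} (H : SimpleGraph S) (c : Sym2 V → ℝ) : ℝ :=
  ∑ᶠ e ∈ H.edgeSet, c (Sym2.map (Subtype.val : S → V) e)


/-
Replacing the part of `T` inside `S` by `Ts` changes the edge set by removing exactly the
edges of `T[S]` and adding those of `Ts`, so the scalarized cost changes by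
`c(Ts) - c(T[S])`. Since `T[S]` is connected and, as a subgraph of a tree, acyclic, it is a
spanning tree of `G[S]`, hence `c(Ts) ≤ c(T[S])` by the minimality of `Ts`.
-/

namespace SimpleGraph

variable {V : Type*} {S : Set V}

lemma subEdgeCost_eq_finsum_liftedEdges (H : SimpleGraph S) (c : Sym2 V → ℝ) :
    subEdgeCost H c = ∑ᶠ e ∈ liftedEdges H, c e := by
  rw [subEdgeCost, liftedEdges, finsum_mem_image]
  exact fun _ _ _ _ h => Sym2.map.injective Subtype.val_injective h

lemma liftedEdges_induce_subset (T : SimpleGraph V) (S : Set V) :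
    liftedEdges (T.induce S) ⊆ T.edgeSet := by
  rintro _ ⟨e, he, rfl⟩
  induction e with
  | h x y => exact he

lemma not_isDiag_of_mem_liftedEdges {H : SimpleGraph S} {e : Sym2 V}
    (he : e ∈ liftedEdges H) : ¬ e.IsDiag := by
  obtain ⟨e, he, rfl⟩ := he
  rw [Sym2.isDiag_map Subtype.val_injective]
  exact H.not_isDiag_of_mem_edgeSet he

lemma mem_liftedEdges_induce {T : SimpleGraph V} {H : SimpleGraph S} {e : Sym2 V}
    (hT : e ∈ T.edgeSet) (hH : e ∈ liftedEdges H) : e ∈ liftedEdges (T.induce S) := by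
  obtain ⟨e, -, rfl⟩ := hH
  exact ⟨e, by induction e with | h x y => exact hT, rfl⟩

lemma disjoint_sdiff_liftedEdges (T : SimpleGraph V) (H : SimpleGraph S) :
    Disjoint (T.edgeSet \ liftedEdges (T.induce S)) (liftedEdges H) :=
  Set.disjoint_left.mpr fun _ he hH => he.2 (mem_liftedEdges_induce he.1 hH)

lemma edgeSet_sgMutant (T : SimpleGraph V) (S : Set V) (Ts : SimpleGraph S) :
    (sgMutant T S Ts).edgeSet = (T.edgeSet \ liftedEdges (T.induce S)) ∪ liftedEdges Ts := by
  rw [sgMutant, edgeSet_fromEdgeSet, sdiff_eq_left, Set.disjoint_left]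
  rintro e (he | he) hdiag
  · exact T.not_isDiag_of_mem_edgeSet he.1 hdiag
  · exact not_isDiag_of_mem_liftedEdges he hdiag

lemma edgeCost_sgMutant [Finite V] (T : SimpleGraph V) (S : Set V) (Ts : SimpleGraph S)
    (c : Sym2 V → ℝ) :
    edgeCost (sgMutant T S Ts) c =
      edgeCost T c - subEdgeCost (T.induce S) c + subEdgeCost Ts c := by
  have hsplit := finsum_mem_add_sdiff (f := c) (liftedEdges_induce_subset T S) (Set.toFinite _)
  rw [edgeCost, edgeSet_sgMutant, finsum_mem_union (disjoint_sdiff_liftedEdges T Ts)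
    (Set.toFinite _) (Set.toFinite _), edgeCost, ← hsplit,
    subEdgeCost_eq_finsum_liftedEdges, subEdgeCost_eq_finsum_liftedEdges]
  ring

lemma edgeCost_linear_comb [Finite V] (H : SimpleGraph V) (c₁ c₂ : Sym2 V → ℝ) (a b : ℝ) :
    a * edgeCost H c₁ + b * edgeCost H c₂ = edgeCost H (fun e => a * c₁ e + b * c₂ e) := by
  rw [edgeCost, edgeCost, edgeCost, mul_finsum_mem' _ _ (Set.toFinite _),
    mul_finsum_mem' _ _ (Set.toFinite _), finsum_mem_add_distrib (Set.toFinite _)]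

lemma IsTree.induce_of_connected {T : SimpleGraph V} (hT : T.IsTree)
    (hconn : (T.induce S).Connected) : (T.induce S).IsTree :=
  ⟨hconn, hT.isAcyclic.induce S⟩

end SimpleGraph

theorem sgMutant_scalarized_cost_le_general {V : Type*} [Fintype V]
    (G : SimpleGraph V)
    (c1 c2 : Sym2 V → ℝ) (lam : ℝ)
    (T : SimpleGraph V) (hTle : T ≤ G) (hT : T.IsTree)
    (S : Set V) (hconn : (T.induce S).Connected)
    (Ts : SimpleGraph S)
    (hmin : ∀ T'' : SimpleGraph S, T'' ≤ G.induce S → T''.IsTree →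
      subEdgeCost Ts (fun e => lam * c1 e + (1 - lam) * c2 e) ≤
        subEdgeCost T'' (fun e => lam * c1 e + (1 - lam) * c2 e)) :
    lam * edgeCost (sgMutant T S Ts) c1 + (1 - lam) * edgeCost (sgMutant T S Ts) c2 ≤
      lam * edgeCost T c1 + (1 - lam) * edgeCost T c2 := by
  have hTS : subEdgeCost Ts _ ≤ subEdgeCost (T.induce S) _ :=
    hmin _ (fun _ _ h => hTle h) (hT.induce_of_connected hconn)
  rw [SimpleGraph.edgeCost_linear_comb, SimpleGraph.edgeCost_linear_comb,
    SimpleGraph.edgeCost_sgMutant]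
  linarith

/-- The scalarized-cost improvement step of the sub-graph mutation: the mutant has
weighted-sum cost at most that of the parent. -/
theorem sgMutant_scalarized_cost_le {V : Type*} [Fintype V]
    (G : SimpleGraph V) (hG : G.Connected)
    (c1 c2 : Sym2 V → ℝ) (lam : ℝ) (hlam0 : 0 ≤ lam) (hlam1 : lam ≤ 1)
    (T : SimpleGraph V) (hTle : T ≤ G) (hT : T.IsTree)
    (S : Set V) (hS : S.Nonempty) (hconn : (T.induce S).Connected)
    (Ts : SimpleGraph S) (hTsle : Ts ≤ G.induce S) (hTs : Ts.IsTree)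
    (hmin : ∀ T'' : SimpleGraph S, T'' ≤ G.induce S → T''.IsTree →
      subEdgeCost Ts (fun e => lam * c1 e + (1 - lam) * c2 e) ≤
        subEdgeCost T'' (fun e => lam * c1 e + (1 - lam) * c2 e)) :
    lam * edgeCost (sgMutant T S Ts) c1 + (1 - lam) * edgeCost (sgMutant T S Ts) c2 ≤
      lam * edgeCost T c1 + (1 - lam) * edgeCost T c2 :=
  sgMutant_scalarized_cost_le_general G c1 c2 lam T hTle hT S hconn Ts hmin
end

section
/- Let G be a finite connected simple graph on vertex set V with two edge-cost functions c1, c2 : E(G) → ℝ, let λ ∈ (0, 1), let T be a spanning tree of G, let S ⊆ V be nonempty with the subgraph of T induced on S connected, and let T_S be a spanning tree of the induced subgraph G[S] that minimizes the scalarized cost ∑_{e} (λ c1(e) + (1−λ) c2(e)) among all spanning trees of G[S]. Let T' be the spanning subgraph of G with edge set (E(T) \ E(T[S])) ∪ E(T_S). Then T does not dominate T'; that is, it is not the case that c1(T) ≤ c1(T') and c2(T) ≤ c2(T') with at least one of these inequalities strict. -/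
/-!
Both `T` and its mutant consist of the edges of `T` outside `T[S]` together with a spanning
tree of `G[S]`: `T[S]` for the parent and `Ts` for the mutant. So the cost differences between
mutant and parent are exactly those between `Ts` and `T[S]`. Since `T[S]` is itself a spanning
tree of `G[S]`, scalarized optimality of `Ts` says the `λ`-weighted difference is `≤ 0`, whereas
domination of the mutant by `T` would make it `> 0`.
-/

lemma scalarize_lt_of_le_of_le_of_lt {lam a₁ a₂ b₁ b₂ : ℝ} (hlam0 : 0 < lam)
    (hlam1 : lam < 1) (h₁ : a₁ ≤ b₁) (h₂ : a₂ ≤ b₂)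
    (hlt : a₁ < b₁ ∨ a₂ < b₂) :
    lam * a₁ + (1 - lam) * a₂ < lam * b₁ + (1 - lam) * b₂ := by
  rcases hlt with hlt | hlt <;> nlinarith

namespace SimpleGraph

variable {V : Type*} {S : Set V}

lemma map_val_mem_edgeSet_iff (T : SimpleGraph V) (e : Sym2 S) :
    Sym2.map Subtype.val e ∈ T.edgeSet ↔ e ∈ (T.induce S).edgeSet := by
  induction e using Sym2.ind with
  | _ a b => rfl

end SimpleGraph

section

variable {V : Type*} {S : Set V}

lemma liftedEdges_induce_subset_edgeSet (T : SimpleGraph V) (S : Set V) :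
    liftedEdges (T.induce S) ⊆ T.edgeSet := by
  rintro _ ⟨e, he, rfl⟩
  exact (T.map_val_mem_edgeSet_iff e).2 he

lemma disjoint_edgeSet_sdiff_liftedEdges_induce (T : SimpleGraph V) (H : SimpleGraph S) :
    Disjoint (T.edgeSet \ liftedEdges (T.induce S)) (liftedEdges H) := by
  rw [Set.disjoint_right]
  rintro _ ⟨e, -, rfl⟩ ⟨heT, heS⟩
  exact heS ⟨e, (T.map_val_mem_edgeSet_iff e).1 heT, rfl⟩

lemma disjoint_liftedEdges_diagSet (H : SimpleGraph S) :
    Disjoint (liftedEdges H) Sym2.diagSet := by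
  rw [Set.disjoint_left]
  rintro _ ⟨e, he, rfl⟩ hdiag
  rw [Sym2.mem_diagSet, Sym2.isDiag_map Subtype.val_injective] at hdiag
  exact H.not_isDiag_of_mem_edgeSet he hdiag

lemma edgeSet_sgMutant (T : SimpleGraph V) (S : Set V) (Ts : SimpleGraph S) :
    (sgMutant T S Ts).edgeSet = (T.edgeSet \ liftedEdges (T.induce S)) ∪ liftedEdges Ts := by
  rw [sgMutant, SimpleGraph.edgeSet_fromEdgeSet, sdiff_eq_left, Set.disjoint_union_left]
  exact ⟨Set.subset_compl_iff_disjoint_right.1 (Set.sdiff_subset.trans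
    T.edgeSet_subset_compl_diagSet), disjoint_liftedEdges_diagSet Ts⟩

lemma subEdgeCost_eq_finsum_liftedEdges (H : SimpleGraph S) (c : Sym2 V → ℝ) :
    subEdgeCost H c = ∑ᶠ e ∈ liftedEdges H, c e :=
  (finsum_mem_image fun _ _ _ _ h => Sym2.map.injective Subtype.val_injective h).symm

variable [Finite V]

lemma subEdgeCost_mul_add_mul (H : SimpleGraph S) (a b : ℝ) (c₁ c₂ : Sym2 V → ℝ) :
    subEdgeCost H (fun e => a * c₁ e + b * c₂ e) =
      a * subEdgeCost H c₁ + b * subEdgeCost H c₂ := by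
  rw [subEdgeCost, subEdgeCost, subEdgeCost, finsum_mem_add_distrib H.edgeSet.toFinite,
    mul_finsum_mem, mul_finsum_mem]

lemma edgeCost_eq_sdiff_add_subEdgeCost_induce (T : SimpleGraph V) (S : Set V)
    (c : Sym2 V → ℝ) :
    edgeCost T c = (∑ᶠ e ∈ T.edgeSet \ liftedEdges (T.induce S), c e) +
      subEdgeCost (T.induce S) c := by
  rw [edgeCost, subEdgeCost_eq_finsum_liftedEdges, ← finsum_mem_union Set.disjoint_sdiff_left
    (Set.toFinite _) (Set.toFinite _), Set.sdiff_union_of_subset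
    (liftedEdges_induce_subset_edgeSet T S)]

lemma edgeCost_sgMutant (T : SimpleGraph V) (S : Set V) (Ts : SimpleGraph S)
    (c : Sym2 V → ℝ) :
    edgeCost (sgMutant T S Ts) c = (∑ᶠ e ∈ T.edgeSet \ liftedEdges (T.induce S), c e) +
      subEdgeCost Ts c := by
  rw [edgeCost, edgeSet_sgMutant, finsum_mem_union (disjoint_edgeSet_sdiff_liftedEdges_induce T Ts)
    (Set.toFinite _) (Set.toFinite _), subEdgeCost_eq_finsum_liftedEdges]

end

theorem sgMutant_not_dominated_by_parent_general {V : Type*} [Fintype V]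
    (G : SimpleGraph V)
    (c1 c2 : Sym2 V → ℝ) (lam : ℝ) (hlam0 : 0 < lam) (hlam1 : lam < 1)
    (T : SimpleGraph V) (hTle : T ≤ G) (hT : T.IsTree)
    (S : Set V) (hconn : (T.induce S).Connected)
    (Ts : SimpleGraph S)
    (hmin : ∀ T'' : SimpleGraph S, T'' ≤ G.induce S → T''.IsTree →
      subEdgeCost Ts (fun e => lam * c1 e + (1 - lam) * c2 e) ≤
        subEdgeCost T'' (fun e => lam * c1 e + (1 - lam) * c2 e)) :
    ¬ (edgeCost T c1 ≤ edgeCost (sgMutant T S Ts) c1 ∧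
        edgeCost T c2 ≤ edgeCost (sgMutant T S Ts) c2 ∧
        (edgeCost T c1 < edgeCost (sgMutant T S Ts) c1 ∨
          edgeCost T c2 < edgeCost (sgMutant T S Ts) c2)) := by
  rintro ⟨h₁, h₂, hlt⟩
  simp only [edgeCost_sgMutant, edgeCost_eq_sdiff_add_subEdgeCost_induce T S,
    add_le_add_iff_left, add_lt_add_iff_left] at h₁ h₂ hlt
  have hopt := hmin (T.induce S) (SimpleGraph.comap_monotone _ hTle) (hT.induce_of_connected hconn)
  rw [subEdgeCost_mul_add_mul, subEdgeCost_mul_add_mul] at hopt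
  exact hopt.not_gt (scalarize_lt_of_le_of_le_of_lt hlam0 hlam1 h₁ h₂ hlt)

/-- The Pareto-beneficial property of the scalarized sub-graph mutation (SGS): the
mutant cannot be dominated by its parent. -/
theorem sgMutant_not_dominated_by_parent {V : Type*} [Fintype V]
    (G : SimpleGraph V) (hG : G.Connected)
    (c1 c2 : Sym2 V → ℝ) (lam : ℝ) (hlam0 : 0 < lam) (hlam1 : lam < 1)
    (T : SimpleGraph V) (hTle : T ≤ G) (hT : T.IsTree)
    (S : Set V) (hS : S.Nonempty) (hconn : (T.induce S).Connected)
    (Ts : SimpleGraph S) (hTsle : Ts ≤ G.induce S) (hTs : Ts.IsTree)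
    (hmin : ∀ T'' : SimpleGraph S, T'' ≤ G.induce S → T''.IsTree →
      subEdgeCost Ts (fun e => lam * c1 e + (1 - lam) * c2 e) ≤
        subEdgeCost T'' (fun e => lam * c1 e + (1 - lam) * c2 e)) :
    ¬ (edgeCost T c1 ≤ edgeCost (sgMutant T S Ts) c1 ∧
        edgeCost T c2 ≤ edgeCost (sgMutant T S Ts) c2 ∧
        (edgeCost T c1 < edgeCost (sgMutant T S Ts) c1 ∨
          edgeCost T c2 < edgeCost (sgMutant T S Ts) c2)) :=
  sgMutant_not_dominated_by_parent_general G c1 c2 lam hlam0 hlam1 T hTle hT S hconn Ts hmin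
end

section
/- Let G be a finite connected simple graph with two edge-cost functions c1, c2 : E(G) → ℝ, let λ ∈ (0, 1), let T be a spanning tree of G, and let D ⊆ E(T). Suppose T* is a spanning tree of G with E(T) \ D ⊆ E(T*) that minimizes the scalarized cost ∑_{e ∈ E(T')} (λ c1(e) + (1−λ) c2(e)) among all spanning trees T' of G with E(T) \ D ⊆ E(T'). Then T does not dominate T*; that is, it is not the case that c1(T) ≤ c1(T*) and c2(T) ≤ c2(T*) with at least one of these inequalities strict. -/
theorem edgeCost_mul_add_mul {V : Type*} {H : SimpleGraph V} (hH : H.edgeSet.Finite)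
    (a b : ℝ) (f g : Sym2 V → ℝ) :
    edgeCost H (fun e => a * f e + b * g e) = a * edgeCost H f + b * edgeCost H g := by
  rw [edgeCost, edgeCost, edgeCost, finsum_mem_add_distrib hH, mul_finsum_mem, mul_finsum_mem]

theorem mul_add_mul_lt_mul_add_mul_of_dominates {α : Type*} [Semiring α] [PartialOrder α]
    [IsStrictOrderedRing α] {w₁ w₂ a₁ a₂ b₁ b₂ : α} (hw₁ : 0 < w₁) (hw₂ : 0 < w₂)
    (h₁ : a₁ ≤ b₁) (h₂ : a₂ ≤ b₂) (h : a₁ < b₁ ∨ a₂ < b₂) :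
    w₁ * a₁ + w₂ * a₂ < w₁ * b₁ + w₂ * b₂ := by
  rcases h with h₁' | h₂'
  · exact add_lt_add_of_lt_of_le (mul_lt_mul_of_pos_left h₁' hw₁)
      (mul_le_mul_of_nonneg_left h₂ hw₂.le)
  · exact add_lt_add_of_le_of_lt (mul_le_mul_of_nonneg_left h₁ hw₁.le)
      (mul_lt_mul_of_pos_left h₂' hw₂)

theorem usgMutant_not_dominated_by_parent_general {V : Type*} [Fintype V]
    (G : SimpleGraph V)
    (c1 c2 : Sym2 V → ℝ) (lam : ℝ) (hlam0 : 0 < lam) (hlam1 : lam < 1)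
    (T : SimpleGraph V) (hTle : T ≤ G) (hT : T.IsTree)
    (D : Set (Sym2 V))
    (Tstar : SimpleGraph V)
    (hmin : ∀ T' : SimpleGraph V, T' ≤ G → T'.IsTree → T.edgeSet \ D ⊆ T'.edgeSet →
      edgeCost Tstar (fun e => lam * c1 e + (1 - lam) * c2 e) ≤
        edgeCost T' (fun e => lam * c1 e + (1 - lam) * c2 e)) :
    ¬ (edgeCost T c1 ≤ edgeCost Tstar c1 ∧ edgeCost T c2 ≤ edgeCost Tstar c2 ∧
        (edgeCost T c1 < edgeCost Tstar c1 ∨ edgeCost T c2 < edgeCost Tstar c2)) := by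
  rintro ⟨h1, h2, hlt⟩
  have hscalar := hmin T hTle hT Set.sdiff_subset
  rw [edgeCost_mul_add_mul (Set.toFinite _), edgeCost_mul_add_mul (Set.toFinite _)] at hscalar
  exact hscalar.not_gt
    (mul_add_mul_lt_mul_add_mul_of_dominates hlam0 (sub_pos.2 hlam1) h1 h2 hlt)

/-- The Pareto-beneficial property of the scalarized unconnected sub-graph mutation
(USGS): the mutant cannot be dominated by its parent. -/
theorem usgMutant_not_dominated_by_parent {V : Type*} [Fintype V]
    (G : SimpleGraph V) (hG : G.Connected)
    (c1 c2 : Sym2 V → ℝ) (lam : ℝ) (hlam0 : 0 < lam) (hlam1 : lam < 1)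
    (T : SimpleGraph V) (hTle : T ≤ G) (hT : T.IsTree)
    (D : Set (Sym2 V)) (hD : D ⊆ T.edgeSet)
    (Tstar : SimpleGraph V) (hTstarle : Tstar ≤ G) (hTstar : Tstar.IsTree)
    (hTstarD : T.edgeSet \ D ⊆ Tstar.edgeSet)
    (hmin : ∀ T' : SimpleGraph V, T' ≤ G → T'.IsTree → T.edgeSet \ D ⊆ T'.edgeSet →
      edgeCost Tstar (fun e => lam * c1 e + (1 - lam) * c2 e) ≤
        edgeCost T' (fun e => lam * c1 e + (1 - lam) * c2 e)) :
    ¬ (edgeCost T c1 ≤ edgeCost Tstar c1 ∧ edgeCost T c2 ≤ edgeCost Tstar c2 ∧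
        (edgeCost T c1 < edgeCost Tstar c1 ∨ edgeCost T c2 < edgeCost Tstar c2)) :=
  usgMutant_not_dominated_by_parent_general G c1 c2 lam hlam0 hlam1 T hTle hT D Tstar hmin
end
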